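/- For genus 7: the Porteous class computation in the cohomology ring H = Q[h,b]/(b^2 + 8bh^3 + 8h^6, 6h^5b + 7h^8). With c_t(B*) = 1 - 2ht + 2h^2t^2 + bt^3 + (-2h^4 - 2hb)t^4 and a(t) = (1+ht)^7·c_t(B*), one has a_3 = b + 7h^3, a_4 = 5bh + 5h^4, a_5 = 7bh^2 + 7h^5, and the 2×2 determinant a_4^2 - a_3·a_5 = 7h^8 in H. -/

import Mathlib

open Polynomial

noncomputable section

/-- `h` in `ℚ[h,b]`. -/
noncomputable def hPoly : MvPolynomial (Fin 2) ℚ := MvPolynomial.X 0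

/-- `b` in `ℚ[h,b]`. -/
noncomputable def bPoly : MvPolynomial (Fin 2) ℚ := MvPolynomial.X 1

/-- The cohomology ring `H = ℚ[h,b]/(b² + 8bh³ + 8h⁶, 6h⁵b + 7h⁸)` of the
10-dimensional spinor variety (Ranestad–Schreyer). -/
noncomputable def SpinorCohRing : Type :=
  MvPolynomial (Fin 2) ℚ ⧸
    Ideal.span {bPoly ^ 2 + 8 * bPoly * hPoly ^ 3 + 8 * hPoly ^ 6,
      6 * hPoly ^ 5 * bPoly + 7 * hPoly ^ 8}

noncomputable instance : CommRing SpinorCohRing :=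
  inferInstanceAs (CommRing (MvPolynomial (Fin 2) ℚ ⧸ Ideal.span _))

/-- The class of `h` in `H`. -/
noncomputable def hCl : SpinorCohRing := Ideal.Quotient.mk _ hPoly

/-- The class of `b` in `H`. -/
noncomputable def bCl : SpinorCohRing := Ideal.Quotient.mk _ bPoly

/-- `c_t(B*) = 1 - 2ht + 2h²t² + bt³ + (-2h⁴ - 2hb)t⁴ ∈ H[t]`. -/
noncomputable def chernBStar : Polynomial SpinorCohRing :=
  C 1 - C (2 * hCl) * X + C (2 * hCl ^ 2) * X ^ 2 + C bCl * X ^ 3 +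
    C (-2 * hCl ^ 4 - 2 * hCl * bCl) * X ^ 4

/-- `a(t) = (1 + ht)^7 · c_t(B*) ∈ H[t]`. -/
noncomputable def aSeries : Polynomial SpinorCohRing :=
  (C 1 + C hCl * X) ^ 7 * chernBStar

/-! Expanding `(1 + ht)^7` binomially gives `a_k = ∑_i C(7,i) hⁱ c_{k-i}`, from which `a₃, a₄, a₅`
are read off. The determinant is `7h⁸` in `H` because already in `ℚ[h,b]`
`a₄² - a₃a₅ - 7h⁸ = 18h²(b² + 8bh³ + 8h⁶) - 25(6h⁵b + 7h⁸)`. -/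

theorem Polynomial.coeff_one_add_C_mul_X_pow {R : Type*} [CommSemiring R] (r : R) (n k : ℕ) :
    ((1 + C r * X) ^ n).coeff k = n.choose k * r ^ k := by
  have hterm (m : ℕ) : (C r * X) ^ m * 1 ^ (n - m) * (n.choose m : R[X]) =
      C (n.choose m * r ^ m) * X ^ m := by
    simp only [one_pow, mul_one, mul_pow, C_mul, C_pow, map_natCast]
    ring
  rw [add_comm, add_pow, Finset.sum_congr rfl fun m _ => hterm m, finsetSum_coeff]
  simp only [coeff_C_mul_X_pow, Finset.sum_ite_eq, Finset.mem_range]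
  split_ifs with hk
  · rfl
  · rw [Nat.choose_eq_zero_of_lt (by omega), Nat.cast_zero, zero_mul]

theorem Polynomial.coeff_one_add_C_mul_X_pow_mul {R : Type*} [CommSemiring R] (r : R) (n k : ℕ)
    (p : R[X]) :
    ((1 + C r * X) ^ n * p).coeff k =
      ∑ i ∈ Finset.range (k + 1), n.choose i * r ^ i * p.coeff (k - i) := by
  rw [coeff_mul, Finset.Nat.sum_antidiagonal_eq_sum_range_succ_mk]
  simp only [coeff_one_add_C_mul_X_pow]

theorem bCl_sq_add_eq_zero : bCl ^ 2 + 8 * bCl * hCl ^ 3 + 8 * hCl ^ 6 = 0 := by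
  have hmem : bPoly ^ 2 + 8 * bPoly * hPoly ^ 3 + 8 * hPoly ^ 6 ∈ Ideal.span
      {bPoly ^ 2 + 8 * bPoly * hPoly ^ 3 + 8 * hPoly ^ 6, 6 * hPoly ^ 5 * bPoly + 7 * hPoly ^ 8} :=
    Ideal.subset_span (Set.mem_insert _ _)
  have hzero := Ideal.Quotient.eq_zero_iff_mem.mpr hmem
  simp only [map_add, map_mul, map_pow, map_ofNat] at hzero
  exact hzero

theorem hCl_pow_five_mul_add_eq_zero : 6 * hCl ^ 5 * bCl + 7 * hCl ^ 8 = 0 := by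
  have hmem : 6 * hPoly ^ 5 * bPoly + 7 * hPoly ^ 8 ∈ Ideal.span
      {bPoly ^ 2 + 8 * bPoly * hPoly ^ 3 + 8 * hPoly ^ 6, 6 * hPoly ^ 5 * bPoly + 7 * hPoly ^ 8} :=
    Ideal.subset_span (Set.mem_insert_of_mem _ rfl)
  have hzero := Ideal.Quotient.eq_zero_iff_mem.mpr hmem
  simp only [map_add, map_mul, map_pow, map_ofNat] at hzero
  exact hzero

theorem aSeries_coeff (k : ℕ) :
    aSeries.coeff k =
      ∑ i ∈ Finset.range (k + 1), (Nat.choose 7 i : SpinorCohRing) * hCl ^ i *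
        chernBStar.coeff (k - i) := by
  rw [aSeries, map_one, coeff_one_add_C_mul_X_pow_mul]

theorem aSeries_coeff_three : aSeries.coeff 3 = bCl + 7 * hCl ^ 3 := by
  simp only [aSeries_coeff, Finset.sum_range_succ, Finset.sum_range_zero, chernBStar, coeff_add,
    coeff_sub, coeff_C_mul, coeff_X_pow, coeff_X, coeff_C]
  norm_num [Nat.choose]
  ring

theorem aSeries_coeff_four : aSeries.coeff 4 = 5 * bCl * hCl + 5 * hCl ^ 4 := by
  simp only [aSeries_coeff, Finset.sum_range_succ, Finset.sum_range_zero, chernBStar, coeff_add,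
    coeff_sub, coeff_C_mul, coeff_X_pow, coeff_X, coeff_C]
  norm_num [Nat.choose]
  ring

theorem aSeries_coeff_five : aSeries.coeff 5 = 7 * bCl * hCl ^ 2 + 7 * hCl ^ 5 := by
  simp only [aSeries_coeff, Finset.sum_range_succ, Finset.sum_range_zero, chernBStar, coeff_add,
    coeff_sub, coeff_C_mul, coeff_X_pow, coeff_X, coeff_C]
  norm_num [Nat.choose]
  ring

/-- **Porteous computation, genus 7.** In
`H = ℚ[h,b]/(b² + 8bh³ + 8h⁶, 6h⁵b + 7h⁸)`, with
`a(t) = (1+ht)^7·c_t(B*)`, one has `a₃ = b + 7h³`, `a₄ = 5bh + 5h⁴`,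
`a₅ = 7bh² + 7h⁵`, and the 2×2 Porteous determinant
`Δ_{4,2}(a) = a₄² - a₃a₅ = 7h⁸` in `H`. -/
theorem porteous_genus7 :
    aSeries.coeff 3 = bCl + 7 * hCl ^ 3 ∧
      aSeries.coeff 4 = 5 * bCl * hCl + 5 * hCl ^ 4 ∧
      aSeries.coeff 5 = 7 * bCl * hCl ^ 2 + 7 * hCl ^ 5 ∧
      aSeries.coeff 4 ^ 2 - aSeries.coeff 3 * aSeries.coeff 5 = 7 * hCl ^ 8 := by
  refine ⟨aSeries_coeff_three, aSeries_coeff_four, aSeries_coeff_five, ?_⟩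
  rw [aSeries_coeff_three, aSeries_coeff_four, aSeries_coeff_five]
  linear_combination 18 * hCl ^ 2 * bCl_sq_add_eq_zero - 25 * hCl_pow_five_mul_add_eq_zero

end
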